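/- arXiv:1406.0950 — 3 statements merged into one kernel-verified Lean document; each statement's English description precedes it below -/
import Mathlib

section
/- Let V and Q be finite-dimensional real inner product spaces, let m be a symmetric positive definite bilinear form on V with associated norm ‖v‖_m = m(v,v)^{1/2}, let D : V → Q be a linear map, and let V₀ be a subspace of V. Suppose e ∈ V₀, p ∈ Q and g ∈ Q satisfy: m(e, w) = ⟨D w, p⟩ for all w ∈ V₀, and ⟨D e, q⟩ = ⟨g, q⟩ for all q ∈ Q; and suppose the inf-sup condition holds with constant C₀ > 0: ‖q‖_Q ≤ C₀ · sup over nonzero w ∈ V₀ of ⟨D w, q⟩ / (m(w,w) + ‖D w‖_Q²)^{1/2}, for all q ∈ Q. Then ‖e‖_m ≤ C₀ ‖g‖_Q. -/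
open RealInnerProductSpace

/-- Abstract form of Lemma 4.1: combining the energy identity with the inf-sup
pressure bound, the `m`-norm of the Galerkin error `e` is bounded by
`C₀` times the norm of the data `g`. -/
theorem mixed_gmsfem_projection_error
    {V Q : Type*}
    [NormedAddCommGroup V] [InnerProductSpace ℝ V] [FiniteDimensional ℝ V]
    [NormedAddCommGroup Q] [InnerProductSpace ℝ Q] [FiniteDimensional ℝ Q]
    (m : V →ₗ[ℝ] V →ₗ[ℝ] ℝ)
    (hm_symm : ∀ v w : V, m v w = m w v)
    (hm_pos : ∀ v : V, v ≠ 0 → 0 < m v v)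
    (D : V →ₗ[ℝ] Q) (V₀ : Submodule ℝ V)
    (C₀ : ℝ) (hC₀ : 0 < C₀)
    (e : V) (he : e ∈ V₀) (p g : Q)
    (h1 : ∀ w ∈ V₀, m e w = ⟪D w, p⟫)
    (h2 : ∀ q : Q, ⟪D e, q⟫ = ⟪g, q⟫)
    (hinfsup : ∀ q : Q, ‖q‖ ≤ C₀ *
      ⨆ w : {w : V // w ∈ V₀ ∧ w ≠ 0},
        ⟪D w.1, q⟫ / Real.sqrt (m w.1 w.1 + ‖D w.1‖ ^ 2)) :
    Real.sqrt (m e e) ≤ C₀ * ‖g‖ := by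
  by_cases he0 : e = 0
  · subst he0
    simp only [map_zero, LinearMap.zero_apply, Real.sqrt_zero]
    positivity
  · have hme : 0 < m e e := hm_pos e he0
    have hnonneg : ∀ v : V, 0 ≤ m v v := by
      intro v
      by_cases hv : v = 0
      · simp [hv]
      · exact (hm_pos v hv).le
    -- Cauchy–Schwarz for the bilinear form m
    have cs : ∀ w : V, (m e w) ^ 2 ≤ m e e * m w w := by
      intro w
      have hdisc := discrim_le_zero (a := m w w) (b := 2 * m e w) (c := m e e) ?_
      · unfold discrim at hdisc
        nlinarith [hdisc]
      · intro t
        have h := hnonneg (e + t • w)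
        simp only [map_add, map_smul, LinearMap.add_apply, LinearMap.smul_apply,
          smul_eq_mul] at h
        rw [hm_symm w e] at h
        nlinarith [h]
    haveI : Nonempty {w : V // w ∈ V₀ ∧ w ≠ 0} := ⟨⟨e, he, he0⟩⟩
    have hsup : (⨆ w : {w : V // w ∈ V₀ ∧ w ≠ 0},
        ⟪D w.1, p⟫ / Real.sqrt (m w.1 w.1 + ‖D w.1‖ ^ 2)) ≤ Real.sqrt (m e e) := by
      apply ciSup_le
      rintro ⟨w, hw, hw0⟩
      have hmw : 0 < m w w := hm_pos w hw0
      have hden : 0 < Real.sqrt (m w w + ‖D w‖ ^ 2) := by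
        apply Real.sqrt_pos.2; positivity
      rw [div_le_iff₀ hden, ← h1 w hw]
      have h5 : m e w ≤ Real.sqrt (m e e) * Real.sqrt (m w w) := by
        have := Real.sqrt_le_sqrt (cs w)
        rw [Real.sqrt_sq_eq_abs, Real.sqrt_mul hme.le] at this
        exact (le_abs_self _).trans this
      have h6 : Real.sqrt (m w w) ≤ Real.sqrt (m w w + ‖D w‖ ^ 2) := by
        apply Real.sqrt_le_sqrt; nlinarith [sq_nonneg ‖D w‖]
      nlinarith [Real.sqrt_nonneg (m e e), Real.sqrt_nonneg (m w w)]
    have hp : ‖p‖ ≤ C₀ * Real.sqrt (m e e) :=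
      (hinfsup p).trans (mul_le_mul_of_nonneg_left hsup hC₀.le)
    have h3 : m e e = ⟪g, p⟫ := by rw [h1 e he, ← h2 p]
    have h4 : m e e ≤ ‖g‖ * ‖p‖ := h3 ▸ real_inner_le_norm g p
    have hs : 0 < Real.sqrt (m e e) := Real.sqrt_pos.2 hme
    have hsq : Real.sqrt (m e e) ^ 2 = m e e := Real.sq_sqrt hme.le
    nlinarith [hp, h4, norm_nonneg g, hs, hsq]
end

section
/- Let V and Q be finite-dimensional real inner product spaces, let m be a symmetric positive definite bilinear form on V with associated norm ‖v‖_m = m(v,v)^{1/2}, let D : V → Q be a linear map, and let V_H ⊆ V and Q_H ⊆ Q be subspaces. Suppose u, û ∈ V, u_H, û_off ∈ V_H, and p′, p_H ∈ Q with p′ − p_H ∈ Q_H satisfy: (i) m(u − u_H, w) = ⟨D w, p′ − p_H⟩ for all w ∈ V_H; (ii) ⟨D(u − u_H), q⟩ = 0 for all q ∈ Q_H; (iii) ⟨D(u − û), q⟩ = 0 for all q ∈ Q_H; and (iv) the inf-sup condition with constant C₀ > 0: ‖q‖_Q ≤ C₀ · sup over nonzero w ∈ V_H of ⟨D w, q⟩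 / (m(w,w) + ‖D w‖_Q²)^{1/2}, for all q ∈ Q_H. Then ‖u − u_H‖_m ≤ ‖u − û_off‖_m + C₀ ‖D(û_off − û)‖_Q. -/
open RealInnerProductSpace

/-- Abstract Céa-type estimate underlying Theorem 4.3: under the Galerkin
orthogonality relations and the discrete inf-sup condition for the coarse
spaces, the `m`-norm error of the coarse solution is bounded by the best
approximation error plus a consistency term. -/
theorem mixed_gmsfem_cea_estimate
    {V Q : Type*}
    [NormedAddCommGroup V] [InnerProductSpace ℝ V] [FiniteDimensional ℝ V]
    [NormedAddCommGroup Q] [InnerProductSpace ℝ Q] [FiniteDimensional ℝ Q]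
    (m : V →ₗ[ℝ] V →ₗ[ℝ] ℝ)
    (hm_symm : ∀ v w : V, m v w = m w v)
    (hm_pos : ∀ v : V, v ≠ 0 → 0 < m v v)
    (D : V →ₗ[ℝ] Q)
    (VH : Submodule ℝ V) (QH : Submodule ℝ Q)
    (u uhat uH uoff : V) (huH : uH ∈ VH) (huoff : uoff ∈ VH)
    (p' pH : Q) (hp : p' - pH ∈ QH)
    (h1 : ∀ w ∈ VH, m (u - uH) w = ⟪D w, p' - pH⟫)
    (h2 : ∀ q ∈ QH, ⟪D (u - uH), q⟫ = 0)
    (h3 : ∀ q ∈ QH, ⟪D (u - uhat), q⟫ = 0)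
    (C₀ : ℝ) (hC₀ : 0 < C₀)
    (hinfsup : ∀ q ∈ QH, ‖q‖ ≤ C₀ *
      ⨆ w : {w : V // w ∈ VH ∧ w ≠ 0},
        ⟪D w.1, q⟫ / Real.sqrt (m w.1 w.1 + ‖D w.1‖ ^ 2)) :
    Real.sqrt (m (u - uH) (u - uH))
      ≤ Real.sqrt (m (u - uoff) (u - uoff)) + C₀ * ‖D (uoff - uhat)‖ := by
  have mnn : ∀ v : V, 0 ≤ m v v := by
    intro v
    rcases eq_or_ne v 0 with h | h
    · simp [h]
    · exact (hm_pos v h).le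
  -- Cauchy–Schwarz for m
  have CS : ∀ v w : V, m v w ≤ Real.sqrt (m v v) * Real.sqrt (m w w) := by
    intro v w
    have hq : ∀ t : ℝ, 0 ≤ m w w * (t * t) + 2 * m v w * t + m v v := by
      intro t
      have hnn := mnn (v + t • w)
      have expand : m (v + t • w) (v + t • w)
          = m w w * (t * t) + 2 * m v w * t + m v v := by
        simp only [map_add, map_smul, LinearMap.add_apply, LinearMap.smul_apply,
          smul_eq_mul, hm_symm w v]
        ring
      rw [expand] at hnn; linarith
    have hd := discrim_le_zero hq
    rw [discrim] at hd
    have hsq : (m v w) ^ 2 ≤ m v v * m w w := by nlinarith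
    calc m v w ≤ |m v w| := le_abs_self _
      _ = Real.sqrt ((m v w) ^ 2) := (Real.sqrt_sq_eq_abs _).symm
      _ ≤ Real.sqrt (m v v * m w w) := Real.sqrt_le_sqrt hsq
      _ = Real.sqrt (m v v) * Real.sqrt (m w w) := Real.sqrt_mul (mnn v) _
  set e := u - uH with he
  set A := Real.sqrt (m e e) with hA
  -- bound on the supremum in the inf-sup condition
  have hsup : (⨆ w : {w : V // w ∈ VH ∧ w ≠ 0},
      ⟪D w.1, p' - pH⟫ / Real.sqrt (m w.1 w.1 + ‖D w.1‖ ^ 2)) ≤ A := by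
    apply Real.iSup_le
    · rintro ⟨w, hwV, hw0⟩
      have hpos : 0 < Real.sqrt (m w w + ‖D w‖ ^ 2) := by
        apply Real.sqrt_pos.mpr
        have := hm_pos w hw0
        positivity
      rw [div_le_iff₀ hpos]
      calc ⟪D w, p' - pH⟫ = m e w := (h1 w hwV).symm
        _ ≤ Real.sqrt (m e e) * Real.sqrt (m w w) := CS e w
        _ ≤ A * Real.sqrt (m w w + ‖D w‖ ^ 2) := by
            apply mul_le_mul_of_nonneg_left _ (Real.sqrt_nonneg _)
            apply Real.sqrt_le_sqrt
            nlinarith [sq_nonneg ‖D w‖]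
    · exact Real.sqrt_nonneg _
  have hpb : ‖p' - pH‖ ≤ C₀ * A :=
    (hinfsup _ hp).trans (mul_le_mul_of_nonneg_left hsup hC₀.le)
  -- key identity
  have hkey : m e (uoff - uH) = ⟪D (uoff - uhat), p' - pH⟫ := by
    have h1' := h1 (uoff - uH) (VH.sub_mem huoff huH)
    have h2' := h2 _ hp
    have h3' := h3 _ hp
    have hdec : uoff - uH = (uoff - uhat) - (u - uhat) + (u - uH) := by abel
    rw [he, h1', hdec, map_add, map_sub, inner_add_left, inner_sub_left, h2', h3']
    ring
  -- split the error
  have hsplit : m e e = m e (u - uoff) + m e (uoff - uH) := by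
    have hdec : e = (u - uoff) + (uoff - uH) := by rw [he]; abel
    conv_lhs => rw [show m e e = m e ((u - uoff) + (uoff - uH)) by rw [← hdec]]
    rw [map_add]
  set B := Real.sqrt (m (u - uoff) (u - uoff)) with hB
  have hb1 : m e (u - uoff) ≤ A * B := CS e (u - uoff)
  have hb2 : m e (uoff - uH) ≤ ‖D (uoff - uhat)‖ * (C₀ * A) := by
    rw [hkey]
    exact (real_inner_le_norm _ _).trans
      (mul_le_mul_of_nonneg_left hpb (norm_nonneg _))
  have hA2 : A ^ 2 = m e e := Real.sq_sqrt (mnn e)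
  have hAnn : 0 ≤ A := Real.sqrt_nonneg _
  have hKnn : 0 ≤ C₀ * ‖D (uoff - uhat)‖ := by positivity
  have hBnn : 0 ≤ B := Real.sqrt_nonneg _
  rcases hAnn.eq_or_lt with h0 | h0
  · rw [← h0]; positivity
  · have hle : A ^ 2 ≤ A * (B + C₀ * ‖D (uoff - uhat)‖) := by
      rw [hA2, hsplit]; nlinarith
    nlinarith
end

section
/- Let V and Q be finite-dimensional real inner product spaces, let m be a symmetric positive definite bilinear form on V with associated norm ‖v‖_m = m(v,v)^{1/2}, let D : V → Q be a linear map, and define the symmetric positive definite bilinear form s on V by s(v, w) = m(v, w) + ⟨D v, D w⟩. Let a be a symmetric positive semidefinite bilinear form on V. Let V_H ⊆ V and Q_H ⊆ Q be subspaces, let Ψ_1, …, Ψ_J ∈ V be pairwise s-orthogonal nonzero vectors satisfying a(Ψ_k, w) = λ_k s(Ψ_k, w) for all w ∈ V with 0 < λ_1 ≤ ⋯ ≤ λ_J, let c_1, …, c_J be real numbers, let û = Σ_{k=1}^J c_k Ψ_k, and for some l < J let û_off = Σ_{k=1}^l c_k Ψ_k and assume û_off ∈ V_H. Suppose u ∈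 V, u_H ∈ V_H, and p′, p_H ∈ Q with p′ − p_H ∈ Q_H satisfy: (i) m(u − u_H, w) = ⟨D w, p′ − p_H⟩ for all w ∈ V_H; (ii) ⟨D(u − u_H), q⟩ = 0 for all q ∈ Q_H; (iii) ⟨D(u − û), q⟩ = 0 for all q ∈ Q_H; and (iv) the inf-sup condition with constant C₀ > 0: ‖q‖_Q ≤ C₀ · sup over nonzero w ∈ V_H of ⟨D w, q⟩ / (m(w,w) + ‖D w‖_Q²)^{1/2}, for all q ∈ Q_H. Then ‖u − u_H‖_m ≤ ‖u − û‖_m + (1 + C₀) λ_{l+1}^{-1/2} a(û, û)^{1/2}. -/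
/-!
With `e = u - uH`, Galerkin orthogonality (i) tested with `uoff - uH ∈ VH`, combined with (ii)
and (iii), splits
`m(e, e) = m(e, u - û) + m(e, û - uoff) - ⟪D (û - uoff), p' - pH⟫`.
Cauchy–Schwarz bounds the first two terms by `‖e‖_m (‖u - û‖_m + ‖û - uoff‖_s)`; the inf-sup
condition tested against (i) bounds the pressure error by `C₀ ‖e‖_m`, so the last term is at most
`C₀ ‖e‖_m ‖û - uoff‖_s`. Finally `û - uoff` is the `s`-orthogonal tail of the eigen-expansion of
`û`, all of whose eigenvalues are at least `λ_{l+1}` (that is `lam ⟨l, hl⟩`, as `Fin J` starts at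
`0`), so `λ_{l+1} ‖û - uoff‖_s² ≤ a(û, û)`.
-/

open RealInnerProductSpace

namespace LinearMap.BilinForm

variable {V : Type*} [AddCommGroup V] [Module ℝ V]

theorem apply_le_sqrt_mul_sqrt {B : LinearMap.BilinForm ℝ V} (hB : B.IsSymm)
    (hs : ∀ v, 0 ≤ B v v) (v w : V) : B v w ≤ √(B v v) * √(B w w) := by
  rw [← Real.sqrt_mul (hs v)]
  exact (le_abs_self _).trans
    (Real.abs_le_sqrt (B.apply_sq_le_of_symm hs (isSymm_iff.mp hB) v w))

theorem apply_sum_smul_sum_smul_of_iIsOrtho {R ι : Type*} [CommRing R] {M : Type*}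
    [AddCommGroup M] [Module R M] {B : LinearMap.BilinForm R M} {Ψ : ι → M} (hB : B.iIsOrtho Ψ)
    (c : ι → R) (F : Finset ι) :
    B (∑ k ∈ F, c k • Ψ k) (∑ k ∈ F, c k • Ψ k) = ∑ k ∈ F, c k ^ 2 * B (Ψ k) (Ψ k) := by
  simp only [map_sum, map_smul, LinearMap.sum_apply, LinearMap.smul_apply, smul_eq_mul]
  refine Finset.sum_congr rfl fun j hj => ?_
  rw [Finset.sum_eq_single_of_mem j hj fun k _ hkj => by simp [hB hkj]]
  ring

theorem iIsOrtho_of_eigen {ι : Type*} {a s : LinearMap.BilinForm ℝ V} {Ψ : ι → V} {ev : ι → ℝ}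
    (heig : ∀ k w, a (Ψ k) w = ev k * s (Ψ k) w) (horth : s.iIsOrtho Ψ) : a.iIsOrtho Ψ :=
  fun j k hjk => by rw [Function.onFun, heig, horth hjk, mul_zero]

theorem mul_apply_tail_le_of_eigen {ι : Type*} [Fintype ι] {a s : LinearMap.BilinForm ℝ V}
    {Ψ : ι → V} {ev : ι → ℝ} (heig : ∀ k w, a (Ψ k) w = ev k * s (Ψ k) w) (horth : s.iIsOrtho Ψ)
    (hs : ∀ v, 0 ≤ s v v) (hev : ∀ k, 0 ≤ ev k) (c : ι → ℝ) {F : Finset ι} {μ : ℝ}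
    (hμ : ∀ k ∈ F, μ ≤ ev k) :
    μ * s (∑ k ∈ F, c k • Ψ k) (∑ k ∈ F, c k • Ψ k) ≤ a (∑ k, c k • Ψ k) (∑ k, c k • Ψ k) := by
  rw [apply_sum_smul_sum_smul_of_iIsOrtho horth, apply_sum_smul_sum_smul_of_iIsOrtho
    (iIsOrtho_of_eigen heig horth), Finset.mul_sum]
  calc ∑ k ∈ F, μ * (c k ^ 2 * s (Ψ k) (Ψ k))
      ≤ ∑ k ∈ F, c k ^ 2 * a (Ψ k) (Ψ k) := Finset.sum_le_sum fun k hk => by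
        have := hs (Ψ k)
        rw [heig, mul_left_comm]
        gcongr
        exact hμ k hk
    _ ≤ ∑ k, c k ^ 2 * a (Ψ k) (Ψ k) :=
        Finset.sum_le_sum_of_subset_of_nonneg (Finset.subset_univ F) fun k _ _ => by
          rw [heig]; have := hs (Ψ k); have := hev k; positivity

end LinearMap.BilinForm

theorem Real.sqrt_le_inv_sqrt_mul_sqrt {μ x y : ℝ} (hμ : 0 < μ) (h : μ * x ≤ y) :
    √x ≤ (√μ)⁻¹ * √y := by
  rw [← Real.sqrt_inv, ← Real.sqrt_mul (inv_nonneg.mpr hμ.le)]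
  exact Real.sqrt_le_sqrt ((le_inv_mul_iff₀ hμ).mpr h)

section SpectralForm

variable {V Q : Type*} [AddCommGroup V] [Module ℝ V] [NormedAddCommGroup Q]
  [InnerProductSpace ℝ Q] {m : LinearMap.BilinForm ℝ V} {D : V →ₗ[ℝ] Q}

variable (m D) in
noncomputable def spectralForm : LinearMap.BilinForm ℝ V :=
  m + (innerₗ Q).compl₁₂ D D

@[simp]
theorem spectralForm_apply (v w : V) : spectralForm m D v w = m v w + ⟪D v, D w⟫ :=
  rfl

theorem spectralForm_apply_self (v : V) : spectralForm m D v v = m v v + ‖D v‖ ^ 2 := by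
  rw [spectralForm_apply, real_inner_self_eq_norm_sq]

theorem apply_self_le_spectralForm (v : V) : m v v ≤ spectralForm m D v v := by
  rw [spectralForm_apply_self]
  exact le_add_of_nonneg_right (sq_nonneg _)

theorem spectralForm_apply_self_nonneg (hm : ∀ v, 0 ≤ m v v) (v : V) :
    0 ≤ spectralForm m D v v :=
  (hm v).trans (apply_self_le_spectralForm v)

theorem norm_le_sqrt_spectralForm (hm : ∀ v, 0 ≤ m v v) (v : V) :
    ‖D v‖ ≤ √(spectralForm m D v v) := by
  refine Real.le_sqrt_of_sq_le ?_
  rw [spectralForm_apply_self]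
  exact le_add_of_nonneg_left (hm v)

theorem norm_le_mul_sqrt_of_infSup (hm : m.IsSymm) (hm₀ : ∀ v, 0 ≤ m v v)
    {VH : Submodule ℝ V} {q : Q} {e : V} {C : ℝ} (hC : 0 ≤ C)
    (hinfsup : ‖q‖ ≤ C * ⨆ w : {w : V // w ∈ VH ∧ w ≠ 0},
      ⟪D w.1, q⟫ / √(m w.1 w.1 + ‖D w.1‖ ^ 2))
    (he : ∀ w ∈ VH, m e w = ⟪D w, q⟫) :
    ‖q‖ ≤ C * √(m e e) := by
  refine hinfsup.trans (mul_le_mul_of_nonneg_left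
    (Real.iSup_le (fun ⟨w, hw, _⟩ => ?_) (Real.sqrt_nonneg _)) hC)
  rw [← spectralForm_apply_self, ← he w hw]
  refine div_le_of_le_mul₀ (Real.sqrt_nonneg _) (Real.sqrt_nonneg _) ?_
  calc m e w ≤ √(m e e) * √(m w w) := LinearMap.BilinForm.apply_le_sqrt_mul_sqrt hm hm₀ e w
    _ ≤ √(m e e) * √(spectralForm m D w w) := by
      gcongr
      exact apply_self_le_spectralForm w

theorem sqrt_apply_sub_le_of_galerkin (hm : m.IsSymm) (hm₀ : ∀ v, 0 ≤ m v v)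
    {u uH uhat uoff : V} {q : Q} {C : ℝ} (hC : 0 ≤ C)
    (hgal : m (u - uH) (uoff - uH) = ⟪D (uoff - uH), q⟫)
    (hdiv : ⟪D (u - uH), q⟫ = 0) (hproj : ⟪D (u - uhat), q⟫ = 0)
    (hq : ‖q‖ ≤ C * √(m (u - uH) (u - uH))) :
    √(m (u - uH) (u - uH)) ≤ √(m (u - uhat) (u - uhat))
      + (1 + C) * √(spectralForm m D (uhat - uoff) (uhat - uoff)) := by
  have hsplit : m (u - uH) (u - uH)
      = m (u - uH) (u - uhat) + m (u - uH) (uhat - uoff) + m (u - uH) (uoff - uH) := by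
    rw [← map_add, ← map_add]
    congr 1
    abel
  have happrox := LinearMap.BilinForm.apply_le_sqrt_mul_sqrt hm hm₀ (u - uH) (u - uhat)
  have htail : m (u - uH) (uhat - uoff)
      ≤ √(m (u - uH) (u - uH)) * √(spectralForm m D (uhat - uoff) (uhat - uoff)) := by
    refine (LinearMap.BilinForm.apply_le_sqrt_mul_sqrt hm hm₀ _ _).trans ?_
    gcongr
    exact apply_self_le_spectralForm _
  have hcross : m (u - uH) (uoff - uH)
      ≤ √(spectralForm m D (uhat - uoff) (uhat - uoff)) * (C * √(m (u - uH) (u - uH))) := by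
    have hsub : uoff - uH = (u - uH) - (u - uhat) - (uhat - uoff) := by abel
    rw [hgal, hsub, map_sub, map_sub, inner_sub_left, inner_sub_left, hdiv, hproj, sub_zero,
      zero_sub, ← inner_neg_left]
    refine (real_inner_le_norm _ _).trans ?_
    rw [norm_neg]
    gcongr
    exact norm_le_sqrt_spectralForm hm₀ _
  set E := √(m (u - uH) (u - uH))
  set A := √(m (u - uhat) (u - uhat))
  set T := √(spectralForm m D (uhat - uoff) (uhat - uoff))
  have hE : E ^ 2 ≤ E * (A + (1 + C) * T) := by
    rw [Real.sq_sqrt (hm₀ _), hsplit]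
    linarith
  have hE₀ : 0 ≤ E := Real.sqrt_nonneg _
  have hrhs : 0 ≤ A + (1 + C) * T := by positivity
  nlinarith

end SpectralForm

theorem mixed_gmsfem_convergence_general
    {V Q : Type*}
    [NormedAddCommGroup V] [InnerProductSpace ℝ V]
    [NormedAddCommGroup Q] [InnerProductSpace ℝ Q]
    (m : V →ₗ[ℝ] V →ₗ[ℝ] ℝ)
    (hm_symm : ∀ v w : V, m v w = m w v)
    (hm_pos : ∀ v : V, v ≠ 0 → 0 < m v v)
    (D : V →ₗ[ℝ] Q)
    (a : V →ₗ[ℝ] V →ₗ[ℝ] ℝ)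
    (VH : Submodule ℝ V) (QH : Submodule ℝ Q)
    {J : ℕ} (Ψ : Fin J → V)
    (horth : ∀ j k : Fin J, j ≠ k →
      m (Ψ j) (Ψ k) + ⟪D (Ψ j), D (Ψ k)⟫ = 0)
    (lam : Fin J → ℝ)
    (hpos : ∀ k : Fin J, 0 < lam k)
    (hmono : Monotone lam)
    (heig : ∀ k : Fin J, ∀ w : V,
      a (Ψ k) w = lam k * (m (Ψ k) w + ⟪D (Ψ k), D w⟫))
    (c : Fin J → ℝ) (l : ℕ) (hl : l < J)
    (uhat uoff : V)
    (huhat : uhat = ∑ k : Fin J, c k • Ψ k)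
    (huoffdef : uoff =
      ∑ k ∈ Finset.univ.filter (fun k : Fin J => (k : ℕ) < l), c k • Ψ k)
    (huoff : uoff ∈ VH)
    (u uH : V) (huH : uH ∈ VH)
    (p' pH : Q) (hp : p' - pH ∈ QH)
    (h1 : ∀ w ∈ VH, m (u - uH) w = ⟪D w, p' - pH⟫)
    (h2 : ∀ q ∈ QH, ⟪D (u - uH), q⟫ = 0)
    (h3 : ∀ q ∈ QH, ⟪D (u - uhat), q⟫ = 0)
    (C₀ : ℝ) (hC₀ : 0 < C₀)
    (hinfsup : ∀ q ∈ QH, ‖q‖ ≤ C₀ *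
      ⨆ w : {w : V // w ∈ VH ∧ w ≠ 0},
        ⟪D w.1, q⟫ / Real.sqrt (m w.1 w.1 + ‖D w.1‖ ^ 2)) :
    Real.sqrt (m (u - uH) (u - uH))
      ≤ Real.sqrt (m (u - uhat) (u - uhat))
        + (1 + C₀) * (Real.sqrt (lam ⟨l, hl⟩))⁻¹ * Real.sqrt (a uhat uhat) := by
  have hm : LinearMap.BilinForm.IsSymm m := ⟨hm_symm⟩
  have hm₀ (v : V) : 0 ≤ m v v := by
    rcases eq_or_ne v 0 with rfl | hv
    exacts [by simp, (hm_pos v hv).le]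
  have htail : uhat - uoff =
      ∑ k ∈ Finset.univ.filter (fun k : Fin J => ¬ (k : ℕ) < l), c k • Ψ k := by
    rw [huhat, huoffdef, sub_eq_iff_eq_add', Finset.sum_filter_add_sum_filter_not]
  have hspectral : lam ⟨l, hl⟩ * spectralForm m D (uhat - uoff) (uhat - uoff) ≤ a uhat uhat := by
    rw [htail, huhat]
    exact LinearMap.BilinForm.mul_apply_tail_le_of_eigen (s := spectralForm m D) heig horth
      (spectralForm_apply_self_nonneg hm₀) (fun k => (hpos k).le) c
      fun k hk => hmono (not_lt.mp (Finset.mem_filter.mp hk).2)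
  have hpressure := norm_le_mul_sqrt_of_infSup hm hm₀ hC₀.le (hinfsup _ hp) h1
  calc _ ≤ _ := sqrt_apply_sub_le_of_galerkin hm hm₀ hC₀.le (h1 _ (VH.sub_mem huoff huH))
        (h2 _ hp) (h3 _ hp) hpressure
    _ ≤ _ := by
      rw [mul_assoc]
      gcongr
      exact Real.sqrt_le_inv_sqrt_mul_sqrt (hpos _) hspectral

/-- Abstract single-patch form of Theorem 4.3, the main convergence theorem for
the mixed GMsFEM: with the spectral inner product `s(v, w) = m(v, w) + ⟪Dv, Dw⟫`,
the error between the fine-grid velocity `u` and the coarse GMsFEM velocity `uH`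
is bounded by the snapshot projection error plus a term decaying as
`λ_{l+1}^{-1/2}`. -/
theorem mixed_gmsfem_convergence
    {V Q : Type*}
    [NormedAddCommGroup V] [InnerProductSpace ℝ V] [FiniteDimensional ℝ V]
    [NormedAddCommGroup Q] [InnerProductSpace ℝ Q] [FiniteDimensional ℝ Q]
    (m : V →ₗ[ℝ] V →ₗ[ℝ] ℝ)
    (hm_symm : ∀ v w : V, m v w = m w v)
    (hm_pos : ∀ v : V, v ≠ 0 → 0 < m v v)
    (D : V →ₗ[ℝ] Q)
    (a : V →ₗ[ℝ] V →ₗ[ℝ] ℝ)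
    (ha_symm : ∀ v w : V, a v w = a w v)
    (ha_nonneg : ∀ v : V, 0 ≤ a v v)
    (VH : Submodule ℝ V) (QH : Submodule ℝ Q)
    {J : ℕ} (Ψ : Fin J → V)
    (hne : ∀ k : Fin J, Ψ k ≠ 0)
    (horth : ∀ j k : Fin J, j ≠ k →
      m (Ψ j) (Ψ k) + ⟪D (Ψ j), D (Ψ k)⟫ = 0)
    (lam : Fin J → ℝ)
    (hpos : ∀ k : Fin J, 0 < lam k)
    (hmono : Monotone lam)
    (heig : ∀ k : Fin J, ∀ w : V,
      a (Ψ k) w = lam k * (m (Ψ k) w + ⟪D (Ψ k), D w⟫))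
    (c : Fin J → ℝ) (l : ℕ) (hl : l < J)
    (uhat uoff : V)
    (huhat : uhat = ∑ k : Fin J, c k • Ψ k)
    (huoffdef : uoff =
      ∑ k ∈ Finset.univ.filter (fun k : Fin J => (k : ℕ) < l), c k • Ψ k)
    (huoff : uoff ∈ VH)
    (u uH : V) (huH : uH ∈ VH)
    (p' pH : Q) (hp : p' - pH ∈ QH)
    (h1 : ∀ w ∈ VH, m (u - uH) w = ⟪D w, p' - pH⟫)
    (h2 : ∀ q ∈ QH, ⟪D (u - uH), q⟫ = 0)
    (h3 : ∀ q ∈ QH, ⟪D (u - uhat), q⟫ = 0)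
    (C₀ : ℝ) (hC₀ : 0 < C₀)
    (hinfsup : ∀ q ∈ QH, ‖q‖ ≤ C₀ *
      ⨆ w : {w : V // w ∈ VH ∧ w ≠ 0},
        ⟪D w.1, q⟫ / Real.sqrt (m w.1 w.1 + ‖D w.1‖ ^ 2)) :
    Real.sqrt (m (u - uH) (u - uH))
      ≤ Real.sqrt (m (u - uhat) (u - uhat))
        + (1 + C₀) * (Real.sqrt (lam ⟨l, hl⟩))⁻¹ * Real.sqrt (a uhat uhat) :=
  mixed_gmsfem_convergence_general m hm_symm hm_pos D a VH QH Ψ horth lam hpos hmono heig c l hl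
    uhat uoff huhat huoffdef huoff u uH huH p' pH hp h1 h2 h3 C₀ hC₀ hinfsup
end
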